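/- Let λ = (λ₁,...,λₙ) with λ₁ ≥ ... ≥ λₙ and λ + a·𝟙 ∈ closure(Γ₃) for some a > 0. Then λ₂₂ ≤ (n−2)a + σ₂^{11}(λ), i.e., the second largest entry satisfies λ₂ ≤ (n−2)a + ∑_{j≥2} λⱼ. -/
import Mathlib

open Finset

noncomputable def s1 {n : ℕ} (x : Fin n → ℝ) : ℝ := ∑ i, x i

noncomputable def s2 {n : ℕ} (x : Fin n → ℝ) : ℝ :=
  ((∑ i, x i) ^ 2 - ∑ i, (x i) ^ 2) / 2

noncomputable def s3 {n : ℕ} (x : Fin n → ℝ) : ℝ :=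
  ((∑ i, x i) ^ 3 - 3 * (∑ i, x i) * (∑ i, (x i) ^ 2) + 2 * ∑ i, (x i) ^ 3) / 6

def Gamma2 {n : ℕ} : Set (Fin n → ℝ) := {x | 0 < s1 x ∧ 0 < s2 x}

def Gamma3 {n : ℕ} : Set (Fin n → ℝ) := {x | 0 < s1 x ∧ 0 < s2 x ∧ 0 < s3 x}

lemma keyA (x y T E : ℝ) (hxy : x ≥ y)
    (h1 : x + y + T ≥ 0) (h2 : x*y + (x+y)*T + E ≥ 0)
    (h6 : T^2 - 2*E ≥ 0) : 0 ≤ y + T := by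
  nlinarith [sq_nonneg y, sq_nonneg (y+T), sq_nonneg (x+y+T)]

lemma key (x y T E F : ℝ) (hxy : x ≥ y) (hs : 0 ≤ y + T)
    (h1 : x + y + T ≥ 0) (h2 : x*y + (x+y)*T + E ≥ 0)
    (h3 : x*y*T + (x+y)*E + F ≥ 0)
    (h5 : T^3 - 3*T*E + 3*F ≤ y*(T^2 - 2*E))
    (h6 : T^2 - 2*E ≥ 0) : 0 ≤ T := by
  by_contra hT
  push_neg at hT
  have hxT : 0 ≤ x + T := by linarith
  have hpos : 0 ≤ 3*x + y + 3*T := by linarith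
  have hh : 0 ≤ (T^2 - 2*E) * (3*x + y + 3*T) := mul_nonneg h6 hpos
  nlinarith [mul_nonneg (mul_nonneg hxT hs) (le_of_lt (neg_pos.2 hT)),
    mul_nonneg (mul_nonneg hxT (le_of_lt (neg_pos.2 hT))) (le_of_lt (neg_pos.2 hT)),
    mul_nonneg (mul_nonneg hs (le_of_lt (neg_pos.2 hT))) (le_of_lt (neg_pos.2 hT)),
    mul_pos (mul_pos (neg_pos.2 hT) (neg_pos.2 hT)) (neg_pos.2 hT)]

lemma key' (x y T Q2 Q3 : ℝ) (hxy : x ≥ y)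
    (h1 : 0 ≤ x + y + T)
    (h2 : 0 ≤ (x+y+T)^2 - (x^2+y^2+Q2))
    (h3 : 0 ≤ (x+y+T)^3 - 3*(x+y+T)*(x^2+y^2+Q2) + 2*(x^3+y^3+Q3))
    (h5 : 0 ≤ y → Q3 ≤ y*Q2) (h6 : 0 ≤ Q2) : 0 ≤ T := by
  have e2 : x*y + (x+y)*T + (T^2-Q2)/2 ≥ 0 := by nlinarith [h2]
  have hsA : 0 ≤ y + T := keyA x y T ((T^2-Q2)/2) hxy (by linarith) e2 (by linarith)
  rcases le_or_gt 0 T with h | h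
  · exact h
  · have hy : 0 ≤ y := by linarith
    have h5' := h5 hy
    have e3 : x*y*T + (x+y)*((T^2-Q2)/2) + (T^3-3*T*Q2+2*Q3)/6 ≥ 0 := by nlinarith [h3]
    have h5k : T^3 - 3*T*((T^2-Q2)/2) + 3*((T^3-3*T*Q2+2*Q3)/6) ≤ y*(T^2 - 2*((T^2-Q2)/2)) := by
      nlinarith [h5']
    exact key x y T ((T^2-Q2)/2) ((T^3-3*T*Q2+2*Q3)/6) hxy hsA (by linarith) e2 e3 h5k (by linarith)

theorem stmt_5 (n : ℕ) (hn : 2 ≤ n) (l : Fin n → ℝ)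
    (hsort : ∀ i j : Fin n, i ≤ j → l j ≤ l i)
    (a : ℝ) (ha : 0 < a)
    (hG3 : (fun i => l i + a) ∈ closure (Gamma3 (n := n))) :
    l ⟨1, by omega⟩ ≤ ((n : ℝ) - 2) * a + (s1 l - l ⟨0, by omega⟩) := by
  set μ : Fin n → ℝ := fun i => l i + a with hμ
  -- closure facts
  have hc1 : Continuous (s1 (n := n)) := by unfold s1; fun_prop
  have hc2 : Continuous (s2 (n := n)) := by unfold s2; fun_prop
  have hc3 : Continuous (s3 (n := n)) := by unfold s3; fun_prop
  have hC : IsClosed {x : Fin n → ℝ | 0 ≤ s1 x ∧ 0 ≤ s2 x ∧ 0 ≤ s3 x} :=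
    ((isClosed_le continuous_const hc1).inter
      ((isClosed_le continuous_const hc2).inter (isClosed_le continuous_const hc3)))
  have hμC : 0 ≤ s1 μ ∧ 0 ≤ s2 μ ∧ 0 ≤ s3 μ := by
    have hsub : Gamma3 (n := n) ⊆ {x : Fin n → ℝ | 0 ≤ s1 x ∧ 0 ≤ s2 x ∧ 0 ≤ s3 x} :=
      fun x hx => ⟨hx.1.le, hx.2.1.le, hx.2.2.le⟩
    exact closure_minimal hsub hC hG3
  obtain ⟨hS1, hS2, hS3⟩ := hμC
  have h0n : 0 < n := by omega
  set i0 : Fin n := ⟨0, by omega⟩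
  set i1 : Fin n := ⟨1, by omega⟩
  have hne : i1 ≠ i0 := by simp [i0, i1, Fin.ext_iff]
  set u : Finset (Fin n) := (Finset.univ.erase i0).erase i1 with hu
  have hsplit : ∀ f : Fin n → ℝ, ∑ i, f i = f i0 + (f i1 + ∑ i ∈ u, f i) := by
    intro f
    rw [hu, Finset.add_sum_erase _ f (by simp [hne]), Finset.add_sum_erase _ f (by simp)]
  -- pointwise bound on the tail
  have htail : ∀ i ∈ u, μ i ≤ μ i1 := by
    intro i hi
    have hi1 : i ≠ i1 := by simp [hu] at hi; exact hi.1
    have hi0 : i ≠ i0 := by simp [hu] at hi; exact hi.2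
    have : i1 ≤ i := by
      have : 2 ≤ (i : ℕ) := by
        have a0 : (i : ℕ) ≠ 0 := by simpa [Fin.ext_iff, i0] using hi0
        have a1 : (i : ℕ) ≠ 1 := by simpa [Fin.ext_iff, i1] using hi1
        omega
      exact Fin.le_def.2 (by simp [i1]; omega)
    have := hsort i1 i this
    simpa [hμ] using (by linarith : l i + a ≤ l i1 + a)
  -- apply key'
  have hkey : 0 ≤ ∑ i ∈ u, μ i := by
    apply key' (μ i0) (μ i1) (∑ i ∈ u, μ i) (∑ i ∈ u, (μ i)^2) (∑ i ∈ u, (μ i)^3)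
    · have := hsort i0 i1 (by simp [i0, i1, Fin.le_def])
      simp only [hμ]; linarith
    · have := hsplit μ; unfold s1 at hS1; linarith
    · have e1 := hsplit μ
      have e2 := hsplit (fun i => (μ i)^2)
      have heq : (μ i0 + μ i1 + ∑ i ∈ u, μ i)^2 - ((μ i0)^2 + (μ i1)^2 + ∑ i ∈ u, (μ i)^2)
          = 2 * s2 μ := by
        unfold s2; rw [e1, e2]; ring
      linarith [heq, hS2]
    · have e1 := hsplit μ
      have e2 := hsplit (fun i => (μ i)^2)
      have e3 := hsplit (fun i => (μ i)^3)
      have heq : (μ i0 + μ i1 + ∑ i ∈ u, μ i)^3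
          - 3*(μ i0 + μ i1 + ∑ i ∈ u, μ i) * ((μ i0)^2 + (μ i1)^2 + ∑ i ∈ u, (μ i)^2)
          + 2*((μ i0)^3 + (μ i1)^3 + ∑ i ∈ u, (μ i)^3) = 6 * s3 μ := by
        unfold s3; rw [e1, e2, e3]; ring
      linarith [heq, hS3]
    · intro hy
      have : ∑ i ∈ u, (μ i)^3 ≤ ∑ i ∈ u, μ i1 * (μ i)^2 := by
        apply Finset.sum_le_sum
        intro i hi
        have h1 := htail i hi
        nlinarith [sq_nonneg (μ i)]
      rw [← Finset.mul_sum] at this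
      exact this
    · exact Finset.sum_nonneg fun i _ => sq_nonneg _
  -- conclude
  have hsum : s1 μ = s1 l + n * a := by
    unfold s1
    simp only [hμ]
    rw [Finset.sum_add_distrib]
    simp [mul_comm]
  have hsplμ := hsplit μ
  have : μ i0 + μ i1 ≤ s1 μ := by unfold s1; linarith
  rw [hsum] at this
  have h0 : μ i0 = l i0 + a := rfl
  have h1 : μ i1 = l i1 + a := rfl
  have hn2 : (2:ℝ) ≤ (n:ℝ) := by exact_mod_cast hn
  rw [h0, h1] at this
  show l i1 ≤ ((n : ℝ) - 2) * a + (s1 l - l i0)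
  linarith
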